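/- Let f : Q → P be an integral homomorphism of fine, sharp monoids. If P has two semistable structures (σ, q₀, Δ, B) and (σ, q₀′, Δ′, B′) over Q with the same underlying set σ, then q₀ = q₀′, Δ = Δ′, and B = B′. Moreover, if f does not split, then the semistable structure of P over Q (if one exists) is unique, including its underlying set σ, which equals the set of all irreducible elements of P not lying in f(Q). -/

import Mathlib

section SemistableMonoid

variable {Q P : Type*} [AddCommMonoid Q] [AddCommMonoid P]

/-- `T·σ = Σ_x T(x)·x` for a finitely supported `T : P →₀ ℕ`. -/
def monDot (T : P →₀ ℕ) : P := T.sum fun x n => n • x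

/-- A commutative monoid is sharp if `x + y = 0` implies `x = y = 0`. -/
def MonSharp (P : Type*) [AddCommMonoid P] : Prop :=
  ∀ x y : P, x + y = 0 → x = 0 ∧ y = 0

/-- An element `x` of a sharp monoid is irreducible if `x = y + z` implies
`y = 0` or `z = 0`. -/
def MonIrreducible (x : P) : Prop := ∀ y z : P, x = y + z → y = 0 ∨ z = 0

/-- A homomorphism of monoids `f : Q → P` is integral if whenever
`f q + p = f q' + p'` there are `q₁, q₂ ∈ Q` and `p'' ∈ P` with `q + q₁ = q' + q₂`,
`p = f q₁ + p''` and `p' = f q₂ + p''`. -/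
def MonIntegralHom (f : Q →+ P) : Prop :=
  ∀ (q q' : Q) (p p' : P), f q + p = f q' + p' →
    ∃ (q₁ q₂ : Q) (p'' : P), q + q₁ = q' + q₂ ∧ p = f q₁ + p'' ∧ p' = f q₂ + p''

/-- `f : Q → P` splits if there is a submonoid `N` of `P` with `P = f(Q) × N`. -/
def MonSplits (f : Q →+ P) : Prop :=
  ∃ N : AddSubmonoid P, Function.Bijective (fun x : Q × N => f x.1 + (x.2 : P))

/-- `P` has a semistable structure `(σ, q₀, Δ, B)` over `Q` (via `f`). -/
def IsSemistableStructure (f : Q →+ P) (σ : Finset P) (q₀ : Q) (Δ B : P →₀ ℕ) : Prop :=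
  -- (S1)
  q₀ ≠ 0 ∧ Δ ≠ 0 ∧ (∀ x, Δ x ≤ 1) ∧
  ↑Δ.support ⊆ (σ : Set P) ∧ ↑B.support ⊆ (σ : Set P) ∧
  -- (S2): `P` is generated by `σ` and `f(Q)`, and `ℕ^σ → P` is injective
  (∀ p : P, ∃ (T : P →₀ ℕ) (q : Q), ↑T.support ⊆ (σ : Set P) ∧ p = monDot T + f q) ∧
  (∀ T T' : P →₀ ℕ, ↑T.support ⊆ (σ : Set P) → ↑T'.support ⊆ (σ : Set P) →
    monDot T = monDot T' → T = T') ∧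
  -- (S3)
  Disjoint Δ.support B.support ∧ monDot Δ = f q₀ + monDot B ∧
  -- (S4)
  (∀ (T T' : P →₀ ℕ) (q : Q), ↑T.support ⊆ (σ : Set P) → ↑T'.support ⊆ (σ : Set P) →
    monDot T = f q + monDot T' → q ≠ 0 → ∀ x ∈ Δ.support, 0 < T x)

end SemistableMonoid

/-
For a fixed `σ`, (S4) of each structure applied to the relation `Δ·σ = f q₀ + B·σ` of the
other gives `Δ = Δ'`. Integrality turns `f q₀ + B·σ = f q₀' + B'·σ` into
`B·σ = f q₁ + S·σ`, `B'·σ = f q₂ + S·σ` with `q₀ + q₁ = q₀' + q₂`, and (S4) at a point of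
`Δ`, where `B` and `B'` vanish, forces `q₁ = q₂ = 0`.

If some `x ∈ σ` satisfies `x = f q + S·σ` with `q ≠ 0`, then (S4) forces `Δ` to be the
indicator of `x`, so `x = f q₀ + B·σ` and `P = f(Q) × ⟨σ \ {x}⟩`. Hence, when `f` does not
split, every element of `σ` is irreducible and outside `f(Q)`; conversely (S2) puts every
such element into `σ`.
-/

section MonDot

variable {P : Type*} [AddCommMonoid P]

theorem monDot_eq_linearCombination (T : P →₀ ℕ) :
    monDot T = Finsupp.linearCombination ℕ id T := by
  rw [Finsupp.linearCombination_apply]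
  rfl

@[simp]
theorem monDot_zero : monDot (0 : P →₀ ℕ) = 0 := by
  simp [monDot_eq_linearCombination]

@[simp]
theorem monDot_single (x : P) (n : ℕ) : monDot (Finsupp.single x n) = n • x := by
  simp [monDot_eq_linearCombination]

theorem monDot_add (T T' : P →₀ ℕ) : monDot (T + T') = monDot T + monDot T' := by
  simp [monDot_eq_linearCombination]

theorem monDot_smul (n : ℕ) (T : P →₀ ℕ) : monDot (n • T) = n • monDot T := by
  simp [monDot_eq_linearCombination]

theorem mem_closure_iff_exists_monDot {s : Set P} {p : P} :
    p ∈ AddSubmonoid.closure s ↔ ∃ T : P →₀ ℕ, ↑T.support ⊆ s ∧ monDot T = p := by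
  rw [← Submodule.span_nat_eq_addSubmonoidClosure, Submodule.mem_toAddSubmonoid,
    ← Set.image_id s, Finsupp.mem_span_image_iff_linearCombination]
  simp [Finsupp.mem_supported, monDot_eq_linearCombination]

end MonDot

namespace Finsupp

variable {α : Type*}

theorem coe_support_add_subset {s : Set α} {T T' : α →₀ ℕ} (hT : ↑T.support ⊆ s)
    (hT' : ↑T'.support ⊆ s) : ↑(T + T').support ⊆ s := by
  classical
  exact (Finset.coe_subset.mpr support_add).trans (by simpa using And.intro hT hT')

theorem eq_zero_or_eq_zero_of_add_eq_single_one {x : α} {T T' : α →₀ ℕ}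
    (h : T + T' = single x 1) : T = 0 ∨ T' = 0 := by
  have hx : T x + T' x = 1 := by simpa using DFunLike.congr_fun h x
  have hle : T ≤ single x 1 := h ▸ le_self_add
  have hle' : T' ≤ single x 1 := h ▸ le_add_self
  have eq_zero {U : α →₀ ℕ} (hU : U ≤ single x 1) (hUx : U x = 0) : U = 0 := by
    ext y
    rcases eq_or_ne y x with rfl | hy
    · simpa using hUx
    · simpa [single_apply, hy.symm] using hU y
  rcases Nat.add_eq_one_iff.mp hx with ⟨h0, -⟩ | ⟨-, h0⟩
  exacts [Or.inl (eq_zero hle h0), Or.inr (eq_zero hle' h0)]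

end Finsupp

namespace IsSemistableStructure

variable {Q P : Type*} [AddCommMonoid Q] [AddCommMonoid P] {f : Q →+ P} {σ : Finset P}
  {q₀ q₀' : Q} {Δ B Δ' B' : P →₀ ℕ}

theorem ne_zero (H : IsSemistableStructure f σ q₀ Δ B) : q₀ ≠ 0 := H.1

theorem delta_ne_zero (H : IsSemistableStructure f σ q₀ Δ B) : Δ ≠ 0 := H.2.1

theorem delta_le_one (H : IsSemistableStructure f σ q₀ Δ B) (x : P) : Δ x ≤ 1 := H.2.2.1 x

theorem support_delta_subset (H : IsSemistableStructure f σ q₀ Δ B) :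
    ↑Δ.support ⊆ (σ : Set P) := H.2.2.2.1

theorem support_B_subset (H : IsSemistableStructure f σ q₀ Δ B) :
    ↑B.support ⊆ (σ : Set P) := H.2.2.2.2.1

theorem exists_monDot_add (H : IsSemistableStructure f σ q₀ Δ B) (p : P) :
    ∃ (T : P →₀ ℕ) (q : Q), ↑T.support ⊆ (σ : Set P) ∧ p = monDot T + f q :=
  H.2.2.2.2.2.1 p

theorem monDot_inj (H : IsSemistableStructure f σ q₀ Δ B) {T T' : P →₀ ℕ}
    (hT : ↑T.support ⊆ (σ : Set P)) (hT' : ↑T'.support ⊆ (σ : Set P))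
    (h : monDot T = monDot T') : T = T' :=
  H.2.2.2.2.2.2.1 T T' hT hT' h

theorem disjoint_support (H : IsSemistableStructure f σ q₀ Δ B) :
    Disjoint Δ.support B.support := H.2.2.2.2.2.2.2.1

theorem monDot_delta (H : IsSemistableStructure f σ q₀ Δ B) :
    monDot Δ = f q₀ + monDot B := H.2.2.2.2.2.2.2.2.1

theorem pos_of_monDot_eq_add (H : IsSemistableStructure f σ q₀ Δ B) {T T' : P →₀ ℕ}
    {q : Q} (hT : ↑T.support ⊆ (σ : Set P)) (hT' : ↑T'.support ⊆ (σ : Set P))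
    (h : monDot T = f q + monDot T') (hq : q ≠ 0) {x : P} (hx : x ∈ Δ.support) : 0 < T x :=
  H.2.2.2.2.2.2.2.2.2 T T' q hT hT' h hq x hx

theorem eq_zero_of_monDot_eq_add (H : IsSemistableStructure f σ q₀ Δ B) {T T' : P →₀ ℕ}
    {q : Q} (hT : ↑T.support ⊆ (σ : Set P)) (hT' : ↑T'.support ⊆ (σ : Set P))
    (h : monDot T = f q + monDot T') {x : P} (hx : x ∈ Δ.support) (hTx : T x = 0) : q = 0 := by
  by_contra hq
  exact (H.pos_of_monDot_eq_add hT hT' h hq hx).ne' hTx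

theorem zero_notMem (H : IsSemistableStructure f σ q₀ Δ B) : (0 : P) ∉ σ := by
  intro h0
  have := H.monDot_inj (T := Finsupp.single 0 1) (T' := 0) (by simpa using h0) (by simp)
    (by simp)
  simp at this

theorem exists_of_map_add_eq_map_add (H : IsSemistableStructure f σ q₀ Δ B)
    (hf : MonIntegralHom f) {q q' : Q} {p p' : P} (h : f q + p = f q' + p') :
    ∃ (q₁ q₂ : Q) (S : P →₀ ℕ), ↑S.support ⊆ (σ : Set P) ∧
      q + q₁ = q' + q₂ ∧ p = f q₁ + monDot S ∧ p' = f q₂ + monDot S := by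
  obtain ⟨q₁, q₂, p'', hq, rfl, rfl⟩ := hf q q' p p' h
  obtain ⟨S, r, hS, rfl⟩ := H.exists_monDot_add p''
  refine ⟨q₁ + r, q₂ + r, S, hS, ?_, ?_, ?_⟩
  · rw [← add_assoc, hq, add_assoc]
  · rw [map_add]; abel
  · rw [map_add]; abel

theorem eq_and_eq_of_map_add_monDot_eq (H : IsSemistableStructure f σ q₀ Δ B)
    (hf : MonIntegralHom f) {q q' : Q} {T T' : P →₀ ℕ} (hT : ↑T.support ⊆ (σ : Set P))
    (hT' : ↑T'.support ⊆ (σ : Set P)) {x : P} (hx : x ∈ Δ.support) (hTx : T x = 0)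
    (hT'x : T' x = 0) (h : f q + monDot T = f q' + monDot T') : q = q' ∧ T = T' := by
  obtain ⟨q₁, q₂, S, hS, hq, h₁, h₂⟩ := H.exists_of_map_add_eq_map_add hf h
  obtain rfl := H.eq_zero_of_monDot_eq_add hT hS h₁ hx hTx
  obtain rfl := H.eq_zero_of_monDot_eq_add hT' hS h₂ hx hT'x
  simp only [add_zero, map_zero, zero_add] at hq h₁ h₂
  exact ⟨hq, H.monDot_inj hT hT' (h₁.trans h₂.symm)⟩

theorem support_delta_subset_of (H : IsSemistableStructure f σ q₀ Δ B)
    (H' : IsSemistableStructure f σ q₀' Δ' B') : Δ'.support ⊆ Δ.support := fun _ hx =>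
  Finsupp.mem_support_iff.mpr (H'.pos_of_monDot_eq_add H.support_delta_subset
    H.support_B_subset H.monDot_delta H.ne_zero hx).ne'

theorem delta_eq (H : IsSemistableStructure f σ q₀ Δ B)
    (H' : IsSemistableStructure f σ q₀' Δ' B') : Δ = Δ' := by
  ext x
  have h : x ∈ Δ'.support → x ∈ Δ.support := fun hx => H.support_delta_subset_of H' hx
  have h' : x ∈ Δ.support → x ∈ Δ'.support := fun hx => H'.support_delta_subset_of H hx
  have := H.delta_le_one x
  have := H'.delta_le_one x
  simp only [Finsupp.mem_support_iff] at h h'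
  omega

theorem eq_of_same_finset (H : IsSemistableStructure f σ q₀ Δ B)
    (H' : IsSemistableStructure f σ q₀' Δ' B') (hf : MonIntegralHom f) :
    q₀ = q₀' ∧ Δ = Δ' ∧ B = B' := by
  have hΔ := H.delta_eq H'
  obtain ⟨x, hx⟩ := Finsupp.support_nonempty_iff.mpr H.delta_ne_zero
  have hBx : B x = 0 :=
    Finsupp.notMem_support_iff.mp (Finset.disjoint_left.mp H.disjoint_support hx)
  have hB'x : B' x = 0 :=
    Finsupp.notMem_support_iff.mp (Finset.disjoint_left.mp H'.disjoint_support (hΔ ▸ hx))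
  have h : f q₀ + monDot B = f q₀' + monDot B' := by
    rw [← H.monDot_delta, hΔ, H'.monDot_delta]
  obtain ⟨hq, hB⟩ := H.eq_and_eq_of_map_add_monDot_eq hf H.support_B_subset H'.support_B_subset
    hx hBx hB'x h
  exact ⟨hq, hΔ, hB⟩

theorem mem_of_monIrreducible (H : IsSemistableStructure f σ q₀ Δ B) {x : P}
    (hirr : MonIrreducible x) (hxf : x ∉ Set.range f) : x ∈ σ := by
  obtain ⟨T, q, hT, rfl⟩ := H.exists_monDot_add x
  obtain ⟨y, hy⟩ : T.support.Nonempty := by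
    rw [Finsupp.support_nonempty_iff]
    rintro rfl
    exact hxf ⟨q, by simp⟩
  have hle : Finsupp.single y 1 ≤ T :=
    Finsupp.single_le_iff.mpr (Nat.one_le_iff_ne_zero.mpr (Finsupp.mem_support_iff.mp hy))
  have hsplit : monDot T + f q = y + (monDot (T - Finsupp.single y 1) + f q) := by
    conv_lhs => rw [← add_tsub_cancel_of_le hle]
    rw [monDot_add, monDot_single, one_nsmul, add_assoc]
  rcases hirr _ _ hsplit with h | h
  · exact absurd (h ▸ hT hy) H.zero_notMem
  · rw [hsplit, h, add_zero]
    exact hT hy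

theorem eq_single_of_eq_map_add (H : IsSemistableStructure f σ q₀ Δ B) {x : P}
    (hx : x ∈ σ) {q : Q} (hq : q ≠ 0) {S : P →₀ ℕ} (hS : ↑S.support ⊆ (σ : Set P))
    (h : x = f q + monDot S) : Δ = Finsupp.single x 1 := by
  have hsub : Δ.support ⊆ {x} := fun w hw => by
    have := H.pos_of_monDot_eq_add (T := Finsupp.single x 1) (by simpa using hx) hS
      (by simpa using h) hq hw
    by_contra hwx
    simp [Ne.symm (Finset.notMem_singleton.mp hwx)] at this
  obtain ⟨w, hw⟩ := Finsupp.support_nonempty_iff.mpr H.delta_ne_zero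
  obtain rfl := Finset.mem_singleton.mp (hsub hw)
  have := H.delta_le_one w
  have := Finsupp.mem_support_iff.mp hw
  exact Finsupp.eq_single_iff.mpr ⟨hsub, by omega⟩

theorem monSplits_of_eq_single (H : IsSemistableStructure f σ q₀ Δ B)
    (hf : MonIntegralHom f) {x : P} (hΔ : Δ = Finsupp.single x 1) : MonSplits f := by
  have hxΔ : x ∈ Δ.support := by simp [hΔ]
  have hx : x = f q₀ + monDot B := by simpa [hΔ] using H.monDot_delta
  have hB : ↑B.support ⊆ (σ : Set P) \ {x} := fun y hy =>
    ⟨H.support_B_subset hy, fun hyx => Finset.disjoint_left.mp H.disjoint_support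
      (hyx ▸ hxΔ) hy⟩
  refine ⟨AddSubmonoid.closure ((σ : Set P) \ {x}), ?_, ?_⟩
  · rintro ⟨q, ⟨p, hp⟩⟩ ⟨q', ⟨p', hp'⟩⟩ h
    obtain ⟨T, hT, rfl⟩ := mem_closure_iff_exists_monDot.mp hp
    obtain ⟨T', hT', rfl⟩ := mem_closure_iff_exists_monDot.mp hp'
    have hTx : T x = 0 := Finsupp.notMem_support_iff.mp fun h => (hT h).2 rfl
    have hT'x : T' x = 0 := Finsupp.notMem_support_iff.mp fun h => (hT' h).2 rfl
    obtain ⟨rfl, rfl⟩ := H.eq_and_eq_of_map_add_monDot_eq hf (hT.trans Set.sdiff_subset)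
      (hT'.trans Set.sdiff_subset) hxΔ hTx hT'x h
    rfl
  · classical
    intro p
    obtain ⟨T, q, hT, rfl⟩ := H.exists_monDot_add p
    have hTerase : ↑(T.erase x).support ⊆ (σ : Set P) \ {x} := by
      rw [Finsupp.support_erase, Finset.coe_erase]
      exact Set.sdiff_subset_sdiff_left hT
    have hN : monDot (T x • B + T.erase x) ∈ AddSubmonoid.closure ((σ : Set P) \ {x}) :=
      mem_closure_iff_exists_monDot.mpr ⟨_, Finsupp.coe_support_add_subset
        ((Finset.coe_subset.mpr Finsupp.support_smul).trans hB) hTerase, rfl⟩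
    refine ⟨(q + T x • q₀, ⟨_, hN⟩), ?_⟩
    -- substitute `x = f q₀ + B·σ` into `T·σ = T(x)·x + (T.erase x)·σ`
    conv_rhs => rw [← Finsupp.single_add_erase x T]
    simp only [monDot_add, monDot_smul, monDot_single, map_add, map_nsmul]
    rw [hx, nsmul_add]
    abel

theorem monSplits_of_eq_map_add (H : IsSemistableStructure f σ q₀ Δ B) (hf : MonIntegralHom f)
    {x : P} (hx : x ∈ σ) {q : Q} (hq : q ≠ 0) {S : P →₀ ℕ}
    (hS : ↑S.support ⊆ (σ : Set P)) (h : x = f q + monDot S) : MonSplits f :=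
  H.monSplits_of_eq_single hf (H.eq_single_of_eq_map_add hx hq hS h)

theorem monIrreducible_of_mem (H : IsSemistableStructure f σ q₀ Δ B) (hQ : MonSharp Q)
    (hf : MonIntegralHom f) (hns : ¬ MonSplits f) {x : P} (hx : x ∈ σ) : MonIrreducible x := by
  intro y z hyz
  obtain ⟨T, q, hT, rfl⟩ := H.exists_monDot_add y
  obtain ⟨T', q', hT', rfl⟩ := H.exists_monDot_add z
  have hTT' := Finsupp.coe_support_add_subset hT hT'
  have hrel : x = f (q + q') + monDot (T + T') := by
    rw [hyz, map_add, monDot_add]; abel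
  by_cases hqq' : q + q' = 0
  · obtain ⟨rfl, rfl⟩ := hQ q q' hqq'
    have hsingle : T + T' = Finsupp.single x 1 :=
      H.monDot_inj hTT' (by simpa using hx) (by simpa using hrel.symm)
    rcases Finsupp.eq_zero_or_eq_zero_of_add_eq_single_one hsingle with rfl | rfl <;> simp
  · exact absurd (H.monSplits_of_eq_map_add hf hx hqq' hTT' hrel) hns

theorem notMem_range_of_mem (H : IsSemistableStructure f σ q₀ Δ B) (hf : MonIntegralHom f)
    (hns : ¬ MonSplits f) {x : P} (hx : x ∈ σ) : x ∉ Set.range f := by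
  rintro ⟨q, rfl⟩
  by_cases hq : q = 0
  · exact H.zero_notMem (by simpa [hq] using hx)
  · exact hns (H.monSplits_of_eq_map_add hf hx hq (S := 0) (by simp) (by simp))

theorem coe_eq_setOf_monIrreducible (H : IsSemistableStructure f σ q₀ Δ B) (hQ : MonSharp Q)
    (hf : MonIntegralHom f) (hns : ¬ MonSplits f) :
    (σ : Set P) = {x : P | MonIrreducible x ∧ x ∉ Set.range f} :=
  Set.ext fun _ => ⟨fun hx =>
    ⟨H.monIrreducible_of_mem hQ hf hns hx, H.notMem_range_of_mem hf hns hx⟩,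
    fun hx => H.mem_of_monIrreducible hx.1 hx.2⟩

end IsSemistableStructure

theorem semistable_structure_unique_general
    {Q P : Type*} [AddCancelCommMonoid Q] [AddCancelCommMonoid P]
    (hQ : MonSharp Q)
    (f : Q →+ P) (hf : MonIntegralHom f) :
    (∀ (σ : Finset P) (q₀ q₀' : Q) (Δ B Δ' B' : P →₀ ℕ),
      IsSemistableStructure f σ q₀ Δ B → IsSemistableStructure f σ q₀' Δ' B' →
      q₀ = q₀' ∧ Δ = Δ' ∧ B = B') ∧
    (¬ MonSplits f →
      ∀ (σ σ' : Finset P) (q₀ q₀' : Q) (Δ B Δ' B' : P →₀ ℕ),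
        IsSemistableStructure f σ q₀ Δ B → IsSemistableStructure f σ' q₀' Δ' B' →
        σ = σ' ∧ q₀ = q₀' ∧ Δ = Δ' ∧ B = B' ∧
        (σ : Set P) = {x : P | MonIrreducible x ∧ x ∉ Set.range f}) := by
  refine ⟨fun σ q₀ q₀' Δ B Δ' B' H H' => H.eq_of_same_finset H' hf, ?_⟩
  intro hns σ σ' q₀ q₀' Δ B Δ' B' H H'
  have hσ := H.coe_eq_setOf_monIrreducible hQ hf hns
  obtain rfl : σ = σ' :=
    Finset.coe_injective (hσ.trans (H'.coe_eq_setOf_monIrreducible hQ hf hns).symm)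
  obtain ⟨hq₀, hΔ, hB⟩ := H.eq_of_same_finset H' hf
  exact ⟨rfl, hq₀, hΔ, hB, hσ⟩

/-- Uniqueness of semistable structures: two semistable structures of `P` over `Q`
with the same underlying set `σ` have equal `q₀`, `Δ` and `B`; moreover, if `f` does
not split, then the semistable structure (if one exists) is unique, including its
underlying set `σ`, which is the set of all irreducible elements of `P` not lying
in `f(Q)`. -/
theorem semistable_structure_unique
    {Q P : Type*} [AddCancelCommMonoid Q] [AddCancelCommMonoid P]
    [AddMonoid.FG Q] [AddMonoid.FG P]
    (hQ : MonSharp Q) (hP : MonSharp P)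
    (f : Q →+ P) (hf : MonIntegralHom f) :
    (∀ (σ : Finset P) (q₀ q₀' : Q) (Δ B Δ' B' : P →₀ ℕ),
      IsSemistableStructure f σ q₀ Δ B → IsSemistableStructure f σ q₀' Δ' B' →
      q₀ = q₀' ∧ Δ = Δ' ∧ B = B') ∧
    (¬ MonSplits f →
      ∀ (σ σ' : Finset P) (q₀ q₀' : Q) (Δ B Δ' B' : P →₀ ℕ),
        IsSemistableStructure f σ q₀ Δ B → IsSemistableStructure f σ' q₀' Δ' B' →
        σ = σ' ∧ q₀ = q₀' ∧ Δ = Δ' ∧ B = B' ∧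
        (σ : Set P) = {x : P | MonIrreducible x ∧ x ∉ Set.range f}) :=
  semistable_structure_unique_general hQ f hf
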